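/- For every positive integer n, p_n = ((n+2)²/((n+1)(n+3)))·exp((n+1)/(2(n+2)²)) < Ω_n²/(Ω_{n-1}·Ω_{n+1}). -/

import Mathlib

open Real

noncomputable def unitBallVolume (n : ℕ) : ℝ :=
  Real.pi ^ ((n : ℝ) / 2) / Real.Gamma (1 + (n : ℝ) / 2)

/-!
With `t = (n + 1) / 2` the powers of `π` cancel and the right-hand side is
`Q t = Γ(t) Γ(t + 1) / Γ(t + 1/2)²`. Log-convexity of `Γ` gives `Q ≥ 1`, and `Γ(s + 1) = s Γ(s)`
gives `Q s = g s * Q (s + 1)` with `g s = (2s + 1)² / (4s(s + 1)) = 1 / (1 - (2s + 1)⁻²)`, so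
`log (g s) > (2s + 1)⁻²`. For `s ≥ t` this dominates `F s - F (s + 1)`, where `F s = t / (4ts + 1)`,
so `log Q - F` decreases strictly along `s, s + 1, s + 2, …`, while it stays `≥ -F (s + N) → 0`.
Hence `log Q (t + 1) > F (t + 1) = t / (2t + 1)²`, and `Q t = g t * Q (t + 1)` gives the claim.
-/

open Filter Topology

noncomputable def gammaRatio (t : ℝ) : ℝ :=
  Gamma t * Gamma (t + 1) / Gamma (t + 1 / 2) ^ 2

section GammaRatio

variable {t : ℝ}

lemma gammaRatio_pos (ht : 0 < t) : 0 < gammaRatio t := by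
  have := Gamma_pos_of_pos ht
  have := Gamma_pos_of_pos (show 0 < t + 1 by linarith)
  have := Gamma_pos_of_pos (show 0 < t + 1 / 2 by linarith)
  unfold gammaRatio
  positivity

lemma one_le_gammaRatio (ht : 0 < t) : 1 ≤ gammaRatio t := by
  have hconv : Gamma (t + 1 / 2) ≤ Gamma t ^ (1 / 2 : ℝ) * Gamma (t + 1) ^ (1 / 2 : ℝ) := by
    convert Gamma_mul_add_mul_le_rpow_Gamma_mul_rpow_Gamma ht (show 0 < t + 1 by linarith)
      one_half_pos one_half_pos (by norm_num) using 2
    ring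
  have hsq : Gamma (t + 1 / 2) ^ 2 ≤ Gamma t * Gamma (t + 1) := by
    have h := pow_le_pow_left₀ (Gamma_pos_of_pos (by linarith)).le hconv 2
    rwa [mul_pow, ← sqrt_eq_rpow, ← sqrt_eq_rpow, sq_sqrt (Gamma_pos_of_pos ht).le,
      sq_sqrt (Gamma_pos_of_pos (by linarith)).le] at h
  rw [gammaRatio, le_div_iff₀ (pow_pos (Gamma_pos_of_pos (by linarith)) 2), one_mul]
  exact hsq

lemma gammaRatio_eq_mul_gammaRatio_add_one (ht : 0 < t) :
    gammaRatio t = (2 * t + 1) ^ 2 / (4 * t * (t + 1)) * gammaRatio (t + 1) := by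
  have h₁ : Gamma (t + 1) = t * Gamma t := Gamma_add_one ht.ne'
  have h₂ : Gamma (t + 1 + 1) = (t + 1) * Gamma (t + 1) := Gamma_add_one (by linarith)
  have h₃ : Gamma (t + 1 + 1 / 2) = (t + 1 / 2) * Gamma (t + 1 / 2) := by
    rw [show t + 1 + 1 / 2 = t + 1 / 2 + 1 by ring]
    exact Gamma_add_one (by linarith)
  have := Gamma_pos_of_pos ht
  have := Gamma_pos_of_pos (show 0 < t + 1 / 2 by linarith)
  rw [gammaRatio, gammaRatio, h₂, h₃, h₁]
  field_simp
  ring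

end GammaRatio

lemma one_div_sq_lt_log {s : ℝ} (hs : 0 < s) :
    1 / (2 * s + 1) ^ 2 < log ((2 * s + 1) ^ 2 / (4 * s * (s + 1))) := by
  have hm : 1 < (2 * s + 1) ^ 2 := by nlinarith
  rw [lt_log_iff_exp_lt (by positivity)]
  convert exp_bound_div_one_sub_of_interval' (x := 1 / (2 * s + 1) ^ 2) (by positivity)
    ((div_lt_one (by positivity)).2 hm) using 1
  rw [show 4 * s * (s + 1) = (2 * s + 1) ^ 2 - 1 by ring, one_sub_div (by positivity),
    one_div_div]

section Telescoping

variable {t s : ℝ}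

lemma div_sub_div_add_one_le_one_div_sq (ht : 0 < t) (hts : t ≤ s) :
    t / (4 * t * s + 1) - t / (4 * t * (s + 1) + 1) ≤ 1 / (2 * s + 1) ^ 2 := by
  have hs : 0 < s := ht.trans_le hts
  rw [div_sub_div _ _ (by positivity) (by positivity),
    div_le_div_iff₀ (by positivity) (by positivity)]
  nlinarith [mul_le_mul_of_nonneg_left hts ht.le]

lemma log_gammaRatio_add_one_sub_lt (ht : 0 < t) (hts : t ≤ s) :
    log (gammaRatio (s + 1)) - t / (4 * t * (s + 1) + 1) <
      log (gammaRatio s) - t / (4 * t * s + 1) := by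
  have hs : 0 < s := ht.trans_le hts
  have hstep : log (gammaRatio s) =
      log ((2 * s + 1) ^ 2 / (4 * s * (s + 1))) + log (gammaRatio (s + 1)) := by
    rw [gammaRatio_eq_mul_gammaRatio_add_one hs,
      log_mul (by positivity) (gammaRatio_pos (by linarith)).ne']
  linarith [one_div_sq_lt_log hs, div_sub_div_add_one_le_one_div_sq ht hts]

lemma log_gammaRatio_add_nat_sub_le (ht : 0 < t) (hts : t ≤ s) (N : ℕ) :
    log (gammaRatio (s + N)) - t / (4 * t * (s + N) + 1) ≤
      log (gammaRatio s) - t / (4 * t * s + 1) := by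
  induction N with
  | zero => simp
  | succ N ih =>
    have h := log_gammaRatio_add_one_sub_lt ht
      (show t ≤ s + N by linarith [N.cast_nonneg (α := ℝ)])
    push_cast
    rw [← add_assoc]
    linarith

lemma le_log_gammaRatio (ht : 0 < t) (hts : t ≤ s) :
    t / (4 * t * s + 1) ≤ log (gammaRatio s) := by
  have hlim : Tendsto (fun N : ℕ => -(t / (4 * t * (s + N) + 1))) atTop (𝓝 0) := by
    have hden : Tendsto (fun N : ℕ => 4 * t * (s + N) + 1) atTop atTop := by
      refine tendsto_atTop_add_const_right _ _ (Tendsto.const_mul_atTop (by positivity) ?_)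
      exact tendsto_atTop_add_const_left _ _ tendsto_natCast_atTop_atTop
    simpa using (tendsto_const_nhds (x := t)).div_atTop hden |>.neg
  have hbound (N : ℕ) :
      -(t / (4 * t * (s + N) + 1)) ≤ log (gammaRatio s) - t / (4 * t * s + 1) := by
    have := log_nonneg (one_le_gammaRatio (show 0 < s + N by linarith [N.cast_nonneg (α := ℝ)]))
    linarith [log_gammaRatio_add_nat_sub_le ht hts N]
  linarith [le_of_tendsto' hlim hbound]

lemma lt_log_gammaRatio (ht : 0 < t) (hts : t ≤ s) :
    t / (4 * t * s + 1) < log (gammaRatio s) := by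
  linarith [log_gammaRatio_add_one_sub_lt ht hts, le_log_gammaRatio ht (show t ≤ s + 1 by linarith)]

end Telescoping

theorem mul_exp_lt_gammaRatio {t : ℝ} (ht : 0 < t) :
    (2 * t + 1) ^ 2 / (4 * t * (t + 1)) * exp (t / (2 * t + 1) ^ 2) < gammaRatio t := by
  have hexp : exp (t / (2 * t + 1) ^ 2) < gammaRatio (t + 1) := by
    rw [← lt_log_iff_exp_lt (gammaRatio_pos (by linarith))]
    convert lt_log_gammaRatio ht (show t ≤ t + 1 by linarith) using 2
    ring
  rw [gammaRatio_eq_mul_gammaRatio_add_one ht]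
  gcongr

lemma unitBallVolume_sq_div {n : ℕ} (hn : 1 ≤ n) :
    unitBallVolume n ^ 2 / (unitBallVolume (n - 1) * unitBallVolume (n + 1)) =
      gammaRatio (((n : ℝ) + 1) / 2) := by
  have hsub : ((n - 1 : ℕ) : ℝ) = n - 1 := by rw [Nat.cast_sub hn, Nat.cast_one]
  have hpi : (π ^ ((n : ℝ) / 2)) ^ 2 = π ^ (((n : ℝ) - 1) / 2) * π ^ (((n : ℝ) + 1) / 2) := by
    rw [sq, ← rpow_add pi_pos, ← rpow_add pi_pos]
    ring_nf
  simp only [unitBallVolume, gammaRatio, hsub, Nat.cast_add, Nat.cast_one, div_pow, hpi]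
  rw [show 1 + (n : ℝ) / 2 = (n + 1) / 2 + 1 / 2 by ring,
    show 1 + ((n : ℝ) - 1) / 2 = (n + 1) / 2 by ring,
    show 1 + ((n : ℝ) + 1) / 2 = (n + 1) / 2 + 1 by ring]
  have := Gamma_pos_of_pos (show 0 < ((n : ℝ) + 1) / 2 by positivity)
  have := Gamma_pos_of_pos (show 0 < ((n : ℝ) + 1) / 2 + 1 by positivity)
  have := rpow_pos_of_pos pi_pos (((n : ℝ) - 1) / 2)
  have := rpow_pos_of_pos pi_pos (((n : ℝ) + 1) / 2)
  field_simp

theorem stmt_15 (n : ℕ) (hn : 1 ≤ n) :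
    (((n : ℝ) + 2) ^ 2 / (((n : ℝ) + 1) * ((n : ℝ) + 3))) *
        Real.exp (((n : ℝ) + 1) / (2 * ((n : ℝ) + 2) ^ 2)) <
      unitBallVolume n ^ 2 / (unitBallVolume (n - 1) * unitBallVolume (n + 1)) := by
  rw [unitBallVolume_sq_div hn]
  convert mul_exp_lt_gammaRatio (t := ((n : ℝ) + 1) / 2) (by positivity) using 3 <;>
    field_simp <;> ring
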